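/- arXiv:1409.2948 — 2 statements merged into one kernel-verified Lean document; each statement's English description precedes it below -/
import Mathlib

section
/- Let C be an additive category and X a covariantly finite subcategory closed under isomorphisms, sums and summands. Given a commutative diagram of right n-exact sequences A_0 → A_1 → ⋯ → A_{n+1} and B_0 → B_1 → ⋯ → B_{n+1} with vertical morphisms h_0, …, h_{n+1}, where f_0 and g_0 are X-monic and admit special n-cokernels with respect to X, the induced morphisms in the quotient C/X form a morphism of standard right (n+2)-angles; in particular Σ(h_0) ∘ a_{n+1} = b_{n+1} ∘ h_{n+1} in C/X, where a_{n+1}, b_{n+1} are the final comparison maps to Σ A_0 and Σ B_0. -/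
open CategoryTheory Limits

universe v u

variable {C : Type u} [Category.{v} C]

section Defs
variable [Preadditive C]

/-- `g` is a weak cokernel of `f`: `g ∘ f = 0` and every morphism killing `f`
factors (not necessarily uniquely) through `g`. -/
def IsWeakCokernel {A B X : C} (f : A ⟶ B) (g : B ⟶ X) : Prop :=
  f ≫ g = 0 ∧ ∀ ⦃D : C⦄ (h : B ⟶ D), f ≫ h = 0 → ∃ k : X ⟶ D, h = g ≫ k

/-- `g` is a cokernel of `f`. -/
def IsCokernelOf {A B X : C} (f : A ⟶ B) (g : B ⟶ X) : Prop :=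
  f ≫ g = 0 ∧ ∀ ⦃D : C⦄ (h : B ⟶ D), f ≫ h = 0 → ∃! k : X ⟶ D, h = g ≫ k

/-- `f` is a weak kernel of `g`. -/
def IsWeakKernel {A B X : C} (g : B ⟶ X) (f : A ⟶ B) : Prop :=
  f ≫ g = 0 ∧ ∀ ⦃D : C⦄ (h : D ⟶ B), h ≫ g = 0 → ∃ k : D ⟶ A, h = k ≫ f

/-- `f` is a kernel of `g`. -/
def IsKernelOf {A B X : C} (g : B ⟶ X) (f : A ⟶ B) : Prop :=
  f ≫ g = 0 ∧ ∀ ⦃D : C⦄ (h : D ⟶ B), h ≫ g = 0 → ∃! k : D ⟶ A, h = k ≫ f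

/-- The sequence `X 0 → X 1 → ⋯ → X (n+1)` is right `n`-exact, i.e.
`(d 1, …, d n)` is an `n`-cokernel of `d 0`: each `d (k+1)` with `k + 2 ≤ n` is a
weak cokernel of `d k`, and `d n` is a cokernel of `d (n-1)`. -/
def IsRightNExactSeq (n : ℕ) (X : ℕ → C) (d : ∀ i, X i ⟶ X (i + 1)) : Prop :=
  (∀ k, k + 2 ≤ n → IsWeakCokernel (d k) (d (k + 1))) ∧ IsCokernelOf (d (n - 1)) (d (n - 1 + 1))

/-- The sequence `X 0 → X 1 → ⋯ → X (n+1)` is left `n`-exact. -/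
def IsLeftNExactSeq (n : ℕ) (X : ℕ → C) (d : ∀ i, X i ⟶ X (i + 1)) : Prop :=
  (∀ k, k + 2 ≤ n → IsWeakKernel (d (k + 1)) (d k)) ∧ IsKernelOf (d 1) (d 0)

/-- `f : A ⟶ B` is `X`-monic with respect to the subcategory given by the predicate `P`:
every morphism from `A` to an object of `P` factors through `f`. -/
def XMonic (P : C → Prop) {A B : C} (f : A ⟶ B) : Prop :=
  ∀ ⦃M : C⦄, P M → ∀ g : A ⟶ M, ∃ h : B ⟶ M, g = f ≫ h

/-- `f` is `X`-epic. -/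
def XEpic (P : C → Prop) {A B : C} (f : A ⟶ B) : Prop :=
  ∀ ⦃M : C⦄, P M → ∀ g : M ⟶ B, ∃ h : M ⟶ A, g = h ≫ f

/-- `(-1)^k • f`. -/
def psign (k : ℕ) {A B : C} (f : A ⟶ B) : A ⟶ B := if Even k then f else -f

/-- `f : A ⟶ B` has an `n`-cokernel. -/
def HasNCokernel (n : ℕ) {A B : C} (f : A ⟶ B) : Prop :=
  ∃ (X : ℕ → C) (d : ∀ i, X i ⟶ X (i + 1)) (e0 : X 0 = A) (e1 : X 1 = B),
    d 0 = eqToHom e0 ≫ f ≫ eqToHom e1.symm ∧ IsRightNExactSeq n X d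

/-- `f : A ⟶ B` has a special `n`-cokernel with respect to `P`: an `n`-cokernel all of whose
intermediate objects lie in `P`. -/
def HasSpecialNCokernel (P : C → Prop) (n : ℕ) {A B : C} (f : A ⟶ B) : Prop :=
  ∃ (X : ℕ → C) (d : ∀ i, X i ⟶ X (i + 1)) (e0 : X 0 = A) (e1 : X 1 = B),
    d 0 = eqToHom e0 ≫ f ≫ eqToHom e1.symm ∧ IsRightNExactSeq n X d ∧
    ∀ i, 2 ≤ i → i ≤ n → P (X i)

end Defs

section QuotCat
variable [Preadditive C]

/-- Morphisms factoring through an object of the subcategory `P`. -/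
def xSet (P : C → Prop) (A B : C) : Set (A ⟶ B) :=
  {f | ∃ (M : C) (u : A ⟶ M) (v : M ⟶ B), P M ∧ f = u ≫ v}

/-- The ideal `[X](A,B)` of morphisms factoring through `P`, as an additive subgroup
(when `P` is closed under finite direct sums this is just `xSet P A B`). -/
def xSub (P : C → Prop) (A B : C) : AddSubgroup (A ⟶ B) :=
  AddSubgroup.closure (xSet P A B)

lemma xSub_comp_left (P : C → Prop) {A B C' : C} {f : A ⟶ B} (hf : f ∈ xSub P A B)
    (g : B ⟶ C') : f ≫ g ∈ xSub P A C' := by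
  induction hf using AddSubgroup.closure_induction with
  | mem x hx =>
      obtain ⟨M, u, v, hM, rfl⟩ := hx
      exact AddSubgroup.subset_closure ⟨M, u, v ≫ g, hM, by simp⟩
  | zero => simpa using (xSub P A C').zero_mem
  | add x y _ _ hx hy => simpa [Preadditive.add_comp] using (xSub P A C').add_mem hx hy
  | neg x _ hx => simpa [Preadditive.neg_comp] using (xSub P A C').neg_mem hx

lemma xSub_comp_right (P : C → Prop) {A B C' : C} (g : A ⟶ B) {f : B ⟶ C'}
    (hf : f ∈ xSub P B C') : g ≫ f ∈ xSub P A C' := by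
  induction hf using AddSubgroup.closure_induction with
  | mem x hx =>
      obtain ⟨M, u, v, hM, rfl⟩ := hx
      exact AddSubgroup.subset_closure ⟨M, g ≫ u, v, hM, by simp⟩
  | zero => simpa using (xSub P A C').zero_mem
  | add x y _ _ hx hy => simpa [Preadditive.comp_add] using (xSub P A C').add_mem hx hy
  | neg x _ hx => simpa [Preadditive.comp_neg] using (xSub P A C').neg_mem hx

/-- The quotient category `C/X`: same objects as `C`. -/
structure QObj (P : C → Prop) : Type u where
  obj : C

variable (P : C → Prop)

instance QObj.category : Category.{v} (QObj P) where
  Hom A B := (A.obj ⟶ B.obj) ⧸ xSub P A.obj B.obj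
  id A := QuotientAddGroup.mk (𝟙 A.obj)
  comp {A B C'} x y :=
    Quotient.liftOn₂ x y (fun a b => QuotientAddGroup.mk (a ≫ b)) (by
      intro a b a' b' ha hb
      have ha' : -a + a' ∈ xSub P _ _ := QuotientAddGroup.leftRel_apply.mp ha
      have hb' : -b + b' ∈ xSub P _ _ := QuotientAddGroup.leftRel_apply.mp hb
      apply Quotient.sound
      refine QuotientAddGroup.leftRel_apply.mpr ?_
      have : -(a ≫ b) + a' ≫ b' = (-a + a') ≫ b + a' ≫ (-b + b') := by
        simp [Preadditive.add_comp, Preadditive.comp_add]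
      rw [this]
      exact AddSubgroup.add_mem _ (xSub_comp_left P ha' b) (xSub_comp_right P a' hb'))
  id_comp x := by
    induction x using Quotient.inductionOn with
    | h a => exact congrArg QuotientAddGroup.mk (Category.id_comp a)
  comp_id x := by
    induction x using Quotient.inductionOn with
    | h a => exact congrArg QuotientAddGroup.mk (Category.comp_id a)
  assoc x y z := by
    induction x using Quotient.inductionOn with
    | h a =>
      induction y using Quotient.inductionOn with
      | h b =>
        induction z using Quotient.inductionOn with
        | h c => exact congrArg QuotientAddGroup.mk (Category.assoc a b c)

instance QObj.preadditive : Preadditive (QObj P) where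
  homGroup A B := inferInstanceAs (AddCommGroup ((A.obj ⟶ B.obj) ⧸ xSub P A.obj B.obj))
  add_comp A B C' x x' y := by
    induction x using Quotient.inductionOn with
    | h a =>
      induction x' using Quotient.inductionOn with
      | h a' =>
        induction y using Quotient.inductionOn with
        | h b => exact congrArg QuotientAddGroup.mk (Preadditive.add_comp _ _ _ a a' b)
  comp_add A B C' x y y' := by
    induction x using Quotient.inductionOn with
    | h a =>
      induction y using Quotient.inductionOn with
      | h b =>
        induction y' using Quotient.inductionOn with
        | h b' => exact congrArg QuotientAddGroup.mk (Preadditive.comp_add _ _ _ a b b')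

/-- The quotient functor `C ⥤ C/X`. -/
def toQ : C ⥤ QObj P where
  obj A := ⟨A⟩
  map f := QuotientAddGroup.mk f
  map_id _ := rfl
  map_comp _ _ := rfl

/-- Image of an object of `C` in `C/X`. -/
abbrev qObj (A : C) : QObj P := ⟨A⟩

/-- Image of a morphism of `C` in `C/X`. -/
abbrev qMap {A B : C} (f : A ⟶ B) : qObj P A ⟶ qObj P B := QuotientAddGroup.mk f

open ZeroObject in
instance [HasZeroObject C] : HasZeroObject (QObj P) := by
  refine ⟨qObj P 0, ?_⟩
  rw [IsZero.iff_id_eq_zero]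
  have h : (𝟙 (qObj P 0)) = qMap P (𝟙 (0 : C)) := rfl
  rw [h, show (𝟙 (0 : C)) = 0 from by simp]
  exact QuotientAddGroup.mk_zero (xSub P 0 0)

instance [HasBinaryBiproducts C] : HasBinaryBiproducts (QObj P) where
  has_binary_biproduct A B := by
    refine HasBinaryBiproduct.mk ⟨?_, ?_⟩
    · exact
        { pt := qObj P (A.obj ⊞ B.obj)
          fst := qMap P biprod.fst
          snd := qMap P biprod.snd
          inl := qMap P biprod.inl
          inr := qMap P biprod.inr
          inl_fst := congrArg (QuotientAddGroup.mk) biprod.inl_fst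
          inl_snd := congrArg (QuotientAddGroup.mk) biprod.inl_snd
          inr_fst := congrArg (QuotientAddGroup.mk) biprod.inr_fst
          inr_snd := congrArg (QuotientAddGroup.mk) biprod.inr_snd }
    · apply isBinaryBilimitOfTotal
      show qMap P biprod.fst ≫ qMap P biprod.inl + qMap P biprod.snd ≫ qMap P biprod.inr = qMap P (𝟙 _)
      show qMap P (biprod.fst ≫ biprod.inl) + qMap P (biprod.snd ≫ biprod.inr) = _
      rw [show qMap P (biprod.fst ≫ biprod.inl) + qMap P (biprod.snd ≫ biprod.inr)
            = qMap P (biprod.fst ≫ biprod.inl + biprod.snd ≫ biprod.inr) from rfl]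
      exact congrArg QuotientAddGroup.mk biprod.total

end QuotCat

/-!
The difference `φ i = a i ≫ u i - h i ≫ b i` is a morphism of complexes from the right `n`-exact
row `A` to the chosen sequence of `B 0`, and it vanishes in degree `0`. Using the weak cokernel
property of each `f k`, one builds step by step maps `s j : A (j + 1) ⟶ XX (B 0) j` with
`f j ≫ (φ (j + 1) - s j ≫ dd (B 0) j) = 0`. Since `f n` is a cokernel, hence epi, this gives
`φ (n + 1) = s n ≫ dd (B 0) n`, which factors through `XX (B 0) n ∈ X`, so `φ (n + 1)` vanishes
in `C/X`.
-/

section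

variable [Preadditive C]

lemma IsCokernelOf.epi {A B X : C} {f : A ⟶ B} {g : B ⟶ X} (hg : IsCokernelOf f g) : Epi g where
  left_cancellation {D} x y hxy := by
    have hx : f ≫ g ≫ x = 0 := by rw [← Category.assoc, hg.1, zero_comp]
    obtain ⟨k, -, hk⟩ := hg.2 _ hx
    exact (hk x rfl).trans (hk y hxy).symm

namespace IsRightNExactSeq

variable {n : ℕ} {X : ℕ → C} {d : ∀ i, X i ⟶ X (i + 1)}

lemma isWeakCokernel (hX : IsRightNExactSeq n X d) {k : ℕ} (hk : k + 1 ≤ n) :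
    IsWeakCokernel (d k) (d (k + 1)) := by
  by_cases hk2 : k + 2 ≤ n
  · exact hX.1 k hk2
  · obtain rfl : k = n - 1 := by omega
    exact ⟨hX.2.1, fun _ m hm => (hX.2.2 m hm).exists⟩

lemma comp_eq_zero (hX : IsRightNExactSeq n X d) {k : ℕ} (hk : k + 1 ≤ n) :
    d k ≫ d (k + 1) = 0 :=
  (hX.isWeakCokernel hk).1

variable {Y : ℕ → C} {d' : ∀ i, Y i ⟶ Y (i + 1)} {φ : ∀ i, X i ⟶ Y i}

lemma exists_partial_homotopy (hX : IsRightNExactSeq n X d)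
    (hY : ∀ k, k + 1 ≤ n → d' k ≫ d' (k + 1) = 0) (hφ : ∀ i, d i ≫ φ (i + 1) = φ i ≫ d' i)
    (hφ0 : φ 0 = 0) {j : ℕ} (hj : j ≤ n) :
    ∃ s : X (j + 1) ⟶ Y j, d j ≫ (φ (j + 1) - s ≫ d' j) = 0 := by
  induction j with
  | zero => exact ⟨0, by rw [zero_comp, sub_zero, hφ, hφ0, zero_comp]⟩
  | succ j ih =>
    obtain ⟨s, hs⟩ := ih (by omega)
    obtain ⟨t, ht⟩ := (hX.isWeakCokernel hj).2 _ hs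
    refine ⟨t, ?_⟩
    have hφt : φ (j + 1) - d (j + 1) ≫ t = s ≫ d' j := by rw [← ht]; abel
    rw [Preadditive.comp_sub, hφ, ← Category.assoc, ← Preadditive.sub_comp, hφt,
      Category.assoc, hY j hj, comp_zero]

lemma exists_eq_comp_of_zero (hX : IsRightNExactSeq n X d)
    (hY : ∀ k, k + 1 ≤ n → d' k ≫ d' (k + 1) = 0) (hφ : ∀ i, d i ≫ φ (i + 1) = φ i ≫ d' i)
    (hφ0 : φ 0 = 0) (hn : 1 ≤ n) : ∃ s : X (n + 1) ⟶ Y n, φ (n + 1) = s ≫ d' n := by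
  obtain ⟨s, hs⟩ := hX.exists_partial_homotopy hY hφ hφ0 le_rfl
  obtain ⟨m, rfl⟩ : ∃ m, n = m + 1 := ⟨n - 1, by omega⟩
  have : Epi (d (m + 1)) := IsCokernelOf.epi hX.2
  exact ⟨s, (cancel_epi (d (m + 1))).1 (sub_eq_zero.1 (by rwa [← Preadditive.comp_sub]))⟩

end IsRightNExactSeq

variable (P : C → Prop)

lemma qMap_comp {A B D : C} (f : A ⟶ B) (g : B ⟶ D) : qMap P (f ≫ g) = qMap P f ≫ qMap P g :=
  rfl

lemma qMap_eq_of_sub_eq_comp {A B M : C} {f g : A ⟶ B} (hM : P M) (s : A ⟶ M) (t : M ⟶ B)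
    (hfg : f - g = s ≫ t) : qMap P f = qMap P g :=
  QuotientAddGroup.eq_iff_sub_mem.2 (AddSubgroup.subset_closure ⟨M, s, t, hM, hfg⟩)

end

theorem morphism_of_standard_angles_general
    [Preadditive C]
    (P : C → Prop) (n : ℕ) (hn : 1 ≤ n)
    -- the chosen sequences defining `Σ`
    (XX : C → ℕ → C) (dd : ∀ A i, XX A i ⟶ XX A (i + 1)) (eX : ∀ A : C, XX A 0 = A)
    (hXexact : ∀ A, IsRightNExactSeq n (XX A) (dd A))
    (hXP : ∀ A i, 1 ≤ i → i ≤ n → P (XX A i))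
    -- the two rows, right `n`-exact with `X`-monic first morphisms
    (A B : ℕ → C) (f : ∀ i, A i ⟶ A (i + 1)) (g : ∀ i, B i ⟶ B (i + 1))
    (hA : IsRightNExactSeq n A f)
    -- the connecting morphism of complexes
    (h : ∀ i, A i ⟶ B i) (hcomm : ∀ i, f i ≫ h (i + 1) = h i ≫ g i)
    -- the comparison morphisms with the chosen sequences
    (a : ∀ i, A i ⟶ XX (A 0) i) (ha0 : a 0 = eqToHom (eX (A 0)).symm)
    (ha : ∀ i, f i ≫ a (i + 1) = a i ≫ dd (A 0) i)
    (b : ∀ i, B i ⟶ XX (B 0) i) (hb0 : b 0 = eqToHom (eX (B 0)).symm)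
    (hb : ∀ i, g i ≫ b (i + 1) = b i ≫ dd (B 0) i)
    -- any lift of `h 0` along the chosen sequences (defining `Σ (h 0)`)
    (u : ∀ i, XX (A 0) i ⟶ XX (B 0) i)
    (hu0 : u 0 = eqToHom (eX (A 0)) ≫ h 0 ≫ eqToHom (eX (B 0)).symm)
    (hu : ∀ i, dd (A 0) i ≫ u (i + 1) = u i ≫ dd (B 0) i) :
    (∀ i, qMap P (f i) ≫ qMap P (h (i + 1)) = qMap P (h i) ≫ qMap P (g i)) ∧
    qMap P (a (n + 1)) ≫ qMap P (u (n + 1)) = qMap P (h (n + 1)) ≫ qMap P (b (n + 1)) := by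
  refine ⟨fun i => by simp only [← qMap_comp, hcomm], ?_⟩
  set φ : ∀ i, A i ⟶ XX (B 0) i := fun i => a i ≫ u i - h i ≫ b i
  have hφ0 : φ 0 = 0 := by simp [φ, ha0, hb0, hu0]
  have hφ : ∀ i, f i ≫ φ (i + 1) = φ i ≫ dd (B 0) i := fun i => by
    simp only [φ, Preadditive.comp_sub, Preadditive.sub_comp, ← Category.assoc, ha, hcomm]
    simp only [Category.assoc, hu, hb]
  obtain ⟨s, hs⟩ := hA.exists_eq_comp_of_zero (fun _ => (hXexact (B 0)).comp_eq_zero) hφ hφ0 hn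
  rw [← qMap_comp, ← qMap_comp]
  exact qMap_eq_of_sub_eq_comp P (hXP (B 0) n hn le_rfl) s (dd (B 0) n) hs

/-- Lemma 3.3. In the setting of Theorem 3.4 (with the chosen sequences
`A = XX A 0 → XX A 1 → ⋯ → XX A (n+1)` defining `Σ`), a commutative diagram of right
`n`-exact sequences with `X`-monic first morphisms induces a morphism of standard right
`(n+2)`-angles in `C/X`; in particular `Σ(h 0) ∘ a (n+1) = b (n+1) ∘ h (n+1)` in `C/X`,
where `Σ (h 0)` is (the class of) `u (n+1)` for any lift `u` of `h 0` along the chosen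
sequences, and `a (n+1)`, `b (n+1)` are the comparison maps to `Σ (A 0)`, `Σ (B 0)`. -/
theorem morphism_of_standard_angles
    [Preadditive C] [HasZeroObject C] [HasFiniteBiproducts C] [HasBinaryBiproducts C]
    (P : C → Prop) (n : ℕ) (hn : 1 ≤ n)
    (hPiso : ∀ {A B : C}, P A → (A ≅ B) → P B)
    (hPsum : ∀ {A B : C}, P A → P B → P (A ⊞ B))
    (hPsummand : ∀ {A M : C}, P M → ∀ (i : A ⟶ M) (p : M ⟶ A), i ≫ p = 𝟙 A → P A)
    (hSpecial : ∀ {A M : C} (f : A ⟶ M), P M → XMonic P f → HasSpecialNCokernel P n f)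
    -- the chosen sequences defining `Σ`
    (XX : C → ℕ → C) (dd : ∀ A i, XX A i ⟶ XX A (i + 1)) (eX : ∀ A : C, XX A 0 = A)
    (hXexact : ∀ A, IsRightNExactSeq n (XX A) (dd A))
    (hXP : ∀ A i, 1 ≤ i → i ≤ n → P (XX A i))
    (hXmono : ∀ A, XMonic P (dd A 0))
    -- the two rows, right `n`-exact with `X`-monic first morphisms
    (A B : ℕ → C) (f : ∀ i, A i ⟶ A (i + 1)) (g : ∀ i, B i ⟶ B (i + 1))
    (hA : IsRightNExactSeq n A f) (hB : IsRightNExactSeq n B g)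
    (hf0 : XMonic P (f 0)) (hg0 : XMonic P (g 0))
    -- the connecting morphism of complexes
    (h : ∀ i, A i ⟶ B i) (hcomm : ∀ i, f i ≫ h (i + 1) = h i ≫ g i)
    -- the comparison morphisms with the chosen sequences
    (a : ∀ i, A i ⟶ XX (A 0) i) (ha0 : a 0 = eqToHom (eX (A 0)).symm)
    (ha : ∀ i, f i ≫ a (i + 1) = a i ≫ dd (A 0) i)
    (b : ∀ i, B i ⟶ XX (B 0) i) (hb0 : b 0 = eqToHom (eX (B 0)).symm)
    (hb : ∀ i, g i ≫ b (i + 1) = b i ≫ dd (B 0) i)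
    -- any lift of `h 0` along the chosen sequences (defining `Σ (h 0)`)
    (u : ∀ i, XX (A 0) i ⟶ XX (B 0) i)
    (hu0 : u 0 = eqToHom (eX (A 0)) ≫ h 0 ≫ eqToHom (eX (B 0)).symm)
    (hu : ∀ i, dd (A 0) i ≫ u (i + 1) = u i ≫ dd (B 0) i) :
    (∀ i, qMap P (f i) ≫ qMap P (h (i + 1)) = qMap P (h i) ≫ qMap P (g i)) ∧
    qMap P (a (n + 1)) ≫ qMap P (u (n + 1)) = qMap P (h (n + 1)) ≫ qMap P (b (n + 1)) :=
  morphism_of_standard_angles_general P n hn XX dd eX hXexact hXP A B f g hA h hcomm a ha0 ha b hb0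
    hb u hu0 hu
end

section
/- In the setting of Theorem 3.4, for each object A of C, the trivial sequence A →^{1_A} A → 0 → ⋯ → 0 → Σ A is a right (n+2)-angle in C/X (axiom RN1(b)). -/
/-!
The trivial sequence `A → A → 0 → ⋯ → 0` is right `n`-exact with `X`-monic first map, and
`1, d⁰, 0, …, 0` is a morphism from it to the sequence `XX A` that defines `ΣA`; so it generates
a standard right `(n+2)`-angle with window `A → A → 0 → ⋯ → 0 → ΣA`. Such a `Σ`-sequence is the
periodic extension of its window, and morphisms of windows extend periodically. Both windows
agree in degrees `0, 1` and vanish in degrees `2, …, n+1`, so the identifications in degrees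
`0, 1` extend to an isomorphism.
-/

open CategoryTheory Limits

universe v u

variable {C : Type u} [Category.{v} C]

section Angulated
set_option linter.unusedSectionVars false
open ZeroObject
variable [Preadditive C]

/-- An `m`-`Σ`-sequence `X 0 → X 1 → ⋯ → X (m-1) → S.obj (X 0)`, encoded as a
`Σ`-periodic complex: `X (m+i) = S.obj (X i)` and `f (m+i) = (-1)^m • S.map (f i)`
(the sign convention of left rotation is built into the periodicity). -/
structure PSeq (m : ℕ) (S : C ⥤ C) where
  X : ℕ → C
  f : ∀ i, X i ⟶ X (i + 1)
  per : ∀ i, X (m + i) = S.obj (X i)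
  fper : ∀ i, f (m + i) = eqToHom (per i) ≫ psign m (S.map (f i)) ≫ eqToHom (per (i + 1)).symm

variable {m : ℕ} {S : C ⥤ C}

/-- The last structural morphism `X (m-1) ⟶ S.obj (X 0)` of an `m`-`Σ`-sequence. -/
def PSeq.wmap (T : PSeq m S) (hm : 1 ≤ m) : T.X (m - 1) ⟶ S.obj (T.X 0) :=
  T.f (m - 1) ≫ eqToHom (by rw [show m - 1 + 1 = m + 0 by omega]; exact T.per 0)

/-- Left rotation of an `m`-`Σ`-sequence. -/
def PSeq.rot (T : PSeq m S) : PSeq m S where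
  X i := T.X (i + 1)
  f i := T.f (i + 1)
  per i := T.per (i + 1)
  fper i := T.fper (i + 1)

/-- A morphism of `m`-`Σ`-sequences. -/
structure SeqHomP (T U : PSeq m S) where
  φ : ∀ i, T.X i ⟶ U.X i
  comm : ∀ i, T.f i ≫ φ (i + 1) = φ i ≫ U.f i
  compat : ∀ i, φ (m + i) = eqToHom (T.per i) ≫ S.map (φ i) ≫ eqToHom (U.per i).symm

/-- Isomorphism of `m`-`Σ`-sequences. -/
def SeqIsoP (T U : PSeq m S) : Prop :=
  ∃ h : SeqHomP T U, ∀ i, IsIso (h.φ i)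

/-- `V` is a direct sum of the `m`-`Σ`-sequences `T` and `U`. -/
def IsDirectSumOf (V T U : PSeq m S) : Prop :=
  ∃ (p : SeqHomP V T) (q : SeqHomP V U) (s : SeqHomP T V) (t : SeqHomP U V),
    (∀ i, s.φ i ≫ p.φ i = 𝟙 _) ∧ (∀ i, t.φ i ≫ q.φ i = 𝟙 _) ∧
    (∀ i, s.φ i ≫ q.φ i = 0) ∧ (∀ i, t.φ i ≫ p.φ i = 0) ∧
    (∀ i, p.φ i ≫ s.φ i + q.φ i ≫ t.φ i = 𝟙 _)

/-- The `m`-`Σ`-sequence `T` has window `A 0 → A 1 → ⋯ → A (m-1) → S.obj (A 0)`. -/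
def IsWindowOf (hm : 1 ≤ m) (T : PSeq m S) (A : ℕ → C) (d : ∀ i, A i ⟶ A (i + 1))
    (w : A (m - 1) ⟶ S.obj (A 0)) : Prop :=
  ∃ e : ∀ j, j ≤ m - 1 → T.X j = A j,
    (∀ j (hj : j + 2 ≤ m),
      T.f j = eqToHom (e j (by omega)) ≫ d j ≫ eqToHom (e (j + 1) (by omega)).symm) ∧
    T.wmap hm ≫ eqToHom (congrArg S.obj (e 0 (by omega))) = eqToHom (e (m - 1) le_rfl) ≫ w

section Oct
variable [HasZeroObject C] [HasBinaryBiproducts C]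
variable (T U V : PSeq m S)

/-- First padded component of the higher mapping cone of (RN4). -/
noncomputable def padT (j : ℕ) : C := if j + 2 ≤ m - 1 then T.X (j + 2) else 0

/-- Second padded component. -/
noncomputable def padU (j : ℕ) : C := if 1 ≤ j ∧ j + 1 ≤ m - 1 then U.X (j + 1) else 0

/-- Third padded component. -/
noncomputable def padV (j : ℕ) : C := if (2 ≤ j ∧ j ≤ m - 1) ∨ j = m - 2 then V.X j else 0

lemma padT_eq {j : ℕ} (h : j + 2 ≤ m - 1) : padT (m := m) T j = T.X (j + 2) := if_pos h
lemma padU_eq {j : ℕ} (h : 1 ≤ j ∧ j + 1 ≤ m - 1) : padU (m := m) U j = U.X (j + 1) := if_pos h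
lemma padV_eq {j : ℕ} (h : (2 ≤ j ∧ j ≤ m - 1) ∨ j = m - 2) : padV (m := m) V j = V.X j :=
  if_pos h

/-- Objects of the higher mapping cone of (RN4) (padded by zero objects). -/
noncomputable def coneObjOct (j : ℕ) : C := (padT T j ⊞ padU U j) ⊞ padV V j

variable (φ : ∀ i, T.X i ⟶ U.X i) (ψ : ∀ i, U.X i ⟶ V.X i) (θ : ∀ i, T.X (i + 1) ⟶ V.X i)

/-- `T`–`T` entry of the cone differential: `f 3` (resp. `-f (j+2)`). -/
noncomputable def entTT (j : ℕ) : padT (m := m) T j ⟶ padT (m := m) T (j + 1) :=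
  if h : j + 2 ≤ m - 1 ∧ j + 3 ≤ m - 1 then
    eqToHom (padT_eq T h.1) ≫ (if j = 0 then T.f (j + 2) else -T.f (j + 2)) ≫
      eqToHom (padT_eq T h.2).symm
  else 0

/-- `T`–`U` entry: `± φ (j+2)`. -/
noncomputable def entTU (j : ℕ) : padT (m := m) T j ⟶ padU (m := m) U (j + 1) :=
  if h : j + 2 ≤ m - 1 then
    eqToHom (padT_eq T h) ≫
      (if j = 0 ∧ 4 ≤ m then φ (j + 2) else psign (j + 1) (φ (j + 2))) ≫
      eqToHom (padU_eq U ⟨by omega, by omega⟩).symm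
  else 0

/-- `T`–`V` entry: `θ (j+1)`. -/
noncomputable def entTV (j : ℕ) : padT (m := m) T j ⟶ padV (m := m) V (j + 1) :=
  if h : (j + 2 ≤ m - 1) ∧ ((2 ≤ j + 1 ∧ j + 1 ≤ m - 1) ∨ j + 1 = m - 2) then
    eqToHom (padT_eq T h.1) ≫ θ (j + 1) ≫ eqToHom (padV_eq V h.2).symm
  else 0

/-- `U`–`U` entry: `-g (j+1)`. -/
noncomputable def entUU (j : ℕ) : padU (m := m) U j ⟶ padU (m := m) U (j + 1) :=
  if h : (1 ≤ j ∧ j + 1 ≤ m - 1) ∧ (1 ≤ j + 1 ∧ j + 2 ≤ m - 1) then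
    eqToHom (padU_eq U h.1) ≫ (-U.f (j + 1)) ≫ eqToHom (padU_eq U h.2).symm
  else 0

/-- `U`–`V` entry: `ψ (j+1)`. -/
noncomputable def entUV (j : ℕ) : padU (m := m) U j ⟶ padV (m := m) V (j + 1) :=
  if h : (1 ≤ j ∧ j + 1 ≤ m - 1) ∧ ((2 ≤ j + 1 ∧ j + 1 ≤ m - 1) ∨ j + 1 = m - 2) then
    eqToHom (padU_eq U h.1) ≫ ψ (j + 1) ≫ eqToHom (padV_eq V h.2).symm
  else 0

/-- `V`–`V` entry: `h (j)`. -/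
noncomputable def entVV (j : ℕ) : padV (m := m) V j ⟶ padV (m := m) V (j + 1) :=
  if h : ((2 ≤ j ∧ j ≤ m - 1) ∨ j = m - 2) ∧ ((2 ≤ j + 1 ∧ j + 1 ≤ m - 1) ∨ j + 1 = m - 2) then
    eqToHom (padV_eq V h.1) ≫ V.f j ≫ eqToHom (padV_eq V h.2).symm
  else 0

/-- The differentials of the higher mapping cone of (RN4): the lower-triangular matrices
`[[±f, 0, 0], [±φ, -g, 0], [θ, ψ, h]]` of the paper. -/
noncomputable def coneMapOct (j : ℕ) : coneObjOct (m := m) T U V j ⟶ coneObjOct (m := m) T U V (j + 1) :=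
  biprod.desc
    (biprod.desc
      (biprod.lift (biprod.lift (entTT T j) (entTU T U φ j)) (entTV T V θ j))
      (biprod.lift (biprod.lift 0 (entUU U j)) (entUV U V ψ j)))
    (biprod.lift (biprod.lift 0 0) (entVV V j))

/-- The last morphism of the higher mapping cone: `Σ f 2 ∘ h (m-1)`. -/
noncomputable def coneLastOct (hm : 3 ≤ m) (eV0 : V.X 0 = T.X 1) :
    coneObjOct (m := m) T U V (m - 1) ⟶ S.obj (coneObjOct (m := m) T U V 0) :=
  biprod.snd ≫ eqToHom (padV_eq V (by omega)) ≫ V.wmap (by omega) ≫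
    eqToHom (congrArg S.obj eV0) ≫ S.map (T.f 1) ≫
    S.map (eqToHom (padT_eq T (by omega : 0 + 2 ≤ m - 1)).symm ≫ biprod.inl ≫ biprod.inl)

end Oct

/-- The higher octahedral axiom (RN4). -/
def OctCondition (m : ℕ) (hm : 3 ≤ m) [HasZeroObject C] [HasBinaryBiproducts C]
    (S : C ⥤ C) (Θ : Set (PSeq m S)) : Prop :=
  ∀ (T U V : PSeq m S), T ∈ Θ → U ∈ Θ → V ∈ Θ →
  ∀ (e0 : U.X 0 = T.X 0) (eV0 : V.X 0 = T.X 1) (eV1 : V.X 1 = U.X 1),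
    U.f 0 = eqToHom e0 ≫ T.f 0 ≫ eqToHom eV0.symm ≫ V.f 0 ≫ eqToHom eV1 →
    ∃ (h : SeqHomP T U) (ψ : ∀ i, U.X i ⟶ V.X i) (θ : ∀ i, T.X (i + 1) ⟶ V.X i),
      h.φ 0 = eqToHom e0.symm ∧
      h.φ 1 = eqToHom eV0.symm ≫ V.f 0 ≫ eqToHom eV1 ∧
      (ψ (m - 1) ≫ V.wmap (by omega) ≫ eqToHom (congrArg S.obj eV0) =
        U.wmap (by omega) ≫ eqToHom (congrArg S.obj e0) ≫ S.map (T.f 0)) ∧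
      ∃ W ∈ Θ, ∃ e : ∀ j, j ≤ m - 1 → W.X j = coneObjOct T U V j,
        (∀ j (hj : j + 2 ≤ m),
          W.f j = eqToHom (e j (by omega)) ≫ coneMapOct T U V h.φ ψ θ j ≫
            eqToHom (e (j + 1) (by omega)).symm) ∧
        (W.wmap (by omega) ≫ eqToHom (congrArg S.obj (e 0 (by omega))) =
          eqToHom (e (m - 1) le_rfl) ≫ coneLastOct T U V hm eV0)

/-- A right `m`-angulated structure: `(C, S, Θ)` satisfies the axioms (RN1)–(RN4). -/
structure IsRightAngulated (m : ℕ) [HasZeroObject C] [HasBinaryBiproducts C]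
    (S : C ⥤ C) (Θ : Set (PSeq m S)) : Prop where
  hm : 3 ≤ m
  /-- (RN1)(a): closed under isomorphisms -/
  isoClosed : ∀ T ∈ Θ, ∀ U, SeqIsoP T U → U ∈ Θ
  /-- (RN1)(a): closed under direct sums -/
  sumClosed : ∀ T ∈ Θ, ∀ U ∈ Θ, ∀ V, IsDirectSumOf V T U → V ∈ Θ
  /-- (RN1)(a): closed under direct summands -/
  summandClosed : ∀ V ∈ Θ, ∀ T U, IsDirectSumOf V T U → T ∈ Θ
  /-- (RN1)(b): trivial sequences -/
  trivialMem : ∀ A : C, ∃ T ∈ Θ, ∃ (e0 : T.X 0 = A) (e1 : T.X 1 = A),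
    T.f 0 = eqToHom (e0.trans e1.symm) ∧ ∀ i, 2 ≤ i → i ≤ m - 1 → IsZero (T.X i)
  /-- (RN1)(c): every morphism is the first morphism of a right `m`-angle -/
  extend : ∀ {A B : C} (u : A ⟶ B), ∃ T ∈ Θ, ∃ (e0 : T.X 0 = A) (e1 : T.X 1 = B),
    T.f 0 = eqToHom e0 ≫ u ≫ eqToHom e1.symm
  /-- (RN2): closed under left rotation -/
  rotate : ∀ T ∈ Θ, T.rot ∈ Θ
  /-- (RN3): completion of commutative squares -/
  complete : ∀ T ∈ Θ, ∀ U ∈ Θ, ∀ (φ0 : T.X 0 ⟶ U.X 0) (φ1 : T.X 1 ⟶ U.X 1),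
    T.f 0 ≫ φ1 = φ0 ≫ U.f 0 → ∃ h : SeqHomP T U, h.φ 0 = φ0 ∧ h.φ 1 = φ1
  /-- (RN4): higher octahedral axiom -/
  oct : OctCondition m hm S Θ

/-- An `m`-angulated structure in the sense of Geiss–Keller–Oppermann: a right
`m`-angulated structure in which `S` is an equivalence and the rotation condition
is necessary and sufficient. -/
def IsNAngulated (m : ℕ) [HasZeroObject C] [HasBinaryBiproducts C]
    (S : C ⥤ C) (Θ : Set (PSeq m S)) : Prop :=
  IsRightAngulated m S Θ ∧ S.IsEquivalence ∧ ∀ T : PSeq m S, T.rot ∈ Θ → T ∈ Θ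

end Angulated

lemma xMonic_id (P : C → Prop) (A : C) : XMonic P (𝟙 A) :=
  fun _ _ g => ⟨g, (Category.id_comp g).symm⟩

section RightExact
variable [Preadditive C]

lemma IsCokernelOf.isWeakCokernel {A B X : C} {f : A ⟶ B} {g : B ⟶ X}
    (h : IsCokernelOf f g) : IsWeakCokernel f g :=
  ⟨h.1, fun _ k hk => (h.2 k hk).exists⟩

lemma isCokernelOf_of_isZero {A B Z : C} (f : A ⟶ B) (g : B ⟶ Z) (hB : IsZero B)
    (hZ : IsZero Z) : IsCokernelOf f g :=
  ⟨hZ.eq_of_tgt _ _, fun _ _ _ => ⟨0, hB.eq_of_src _ _, fun _ _ => hZ.eq_of_src _ _⟩⟩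

lemma isCokernelOf_id {A Z : C} (g : A ⟶ Z) (hZ : IsZero Z) : IsCokernelOf (𝟙 A) g :=
  ⟨hZ.eq_of_tgt _ _, fun _ h hh =>
    ⟨0, by simpa using hh, fun _ _ => hZ.eq_of_src _ _⟩⟩

lemma isRightNExactSeq_of_isCokernelOf (n : ℕ) {X : ℕ → C} {d : ∀ i, X i ⟶ X (i + 1)}
    (h : ∀ k, IsCokernelOf (d k) (d (k + 1))) : IsRightNExactSeq n X d :=
  ⟨fun k _ => (h k).isWeakCokernel, h (n - 1)⟩

lemma IsRightNExactSeq.comp_eq_zero_s10 {n : ℕ} {X : ℕ → C} {d : ∀ i, X i ⟶ X (i + 1)}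
    (h : IsRightNExactSeq n X d) : d 0 ≫ d 1 = 0 := by
  by_cases hn : 2 ≤ n
  · exact (h.1 0 hn).1
  · obtain ⟨hcomp, -⟩ := h.2
    rwa [show n - 1 = 0 by omega] at hcomp

end RightExact

section QuotientZero
variable [Preadditive C]

lemma isZero_qObj (P : C → Prop) {M : C} (hM : IsZero M) : IsZero (qObj P M) := by
  rw [IsZero.iff_id_eq_zero]
  exact congrArg (QuotientAddGroup.mk (s := xSub P M M)) (hM.eq_of_src (𝟙 M) 0)

end QuotientZero

section TrivialSequence
open ZeroObject
variable [HasZeroObject C]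

noncomputable def trivSeqObj (A : C) : ℕ → C
  | 0 => A
  | 1 => A
  | _ + 2 => 0

lemma isZero_trivSeqObj (A : C) {j : ℕ} (h : 2 ≤ j) : IsZero (trivSeqObj A j) := by
  obtain ⟨k, rfl⟩ := Nat.exists_eq_add_of_le' h
  exact isZero_zero C

variable [Preadditive C]

noncomputable def trivSeqMap (A : C) : ∀ j, trivSeqObj A j ⟶ trivSeqObj A (j + 1)
  | 0 => 𝟙 A
  | _ + 1 => 0

lemma isRightNExactSeq_trivSeq (A : C) (n : ℕ) :
    IsRightNExactSeq n (trivSeqObj A) (trivSeqMap A) :=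
  isRightNExactSeq_of_isCokernelOf n fun
    | 0 => isCokernelOf_id _ (isZero_zero C)
    | _ + 1 => isCokernelOf_of_isZero _ _ (isZero_zero C) (isZero_zero C)

noncomputable def trivSeqHom {X : ℕ → C} (d : ∀ i, X i ⟶ X (i + 1)) {A : C} (e : X 0 = A) :
    ∀ i, trivSeqObj A i ⟶ X i
  | 0 => eqToHom e.symm
  | 1 => eqToHom e.symm ≫ d 0
  | _ + 2 => 0

lemma trivSeqMap_comp_trivSeqHom {X : ℕ → C} {d : ∀ i, X i ⟶ X (i + 1)} {A : C}
    (e : X 0 = A) (hd : d 0 ≫ d 1 = 0) :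
    ∀ i, trivSeqMap A i ≫ trivSeqHom d e (i + 1) = trivSeqHom d e i ≫ d i
  | 0 => Category.id_comp _
  | 1 => by simp [trivSeqMap, trivSeqHom, hd]
  | _ + 2 => (isZero_zero C).eq_of_src _ _

end TrivialSequence

section Sign
variable [Preadditive C]

lemma psign_comp (k : ℕ) {A B Z : C} (f : A ⟶ B) (g : B ⟶ Z) :
    psign k (f ≫ g) = psign k f ≫ g := by
  unfold psign; split <;> simp

lemma comp_psign (k : ℕ) {A B Z : C} (f : A ⟶ B) (g : B ⟶ Z) :
    psign k (f ≫ g) = f ≫ psign k g := by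
  unfold psign; split <;> simp

end Sign

namespace PSeq
variable (S : C ⥤ C) {m : ℕ}

def perObj (hm : 1 ≤ m) (B : ℕ → C) (j : ℕ) : C :=
  if _ : j < m then B j else S.obj (perObj hm B (j - m))
termination_by j
decreasing_by omega

variable (hm : 1 ≤ m) (B : ℕ → C)

lemma perObj_of_lt {j : ℕ} (h : j < m) : perObj S hm B j = B j := by
  rw [perObj, dif_pos h]

lemma perObj_of_le {j : ℕ} (h : m ≤ j) : perObj S hm B j = S.obj (perObj S hm B (j - m)) := by
  rw [perObj, dif_neg (by omega)]

lemma perObj_add (i : ℕ) : perObj S hm B (m + i) = S.obj (perObj S hm B i) := by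
  rw [perObj_of_le S hm B (Nat.le_add_right m i), Nat.add_sub_cancel_left]

lemma perObj_last : perObj S hm B m = S.obj (B 0) := by
  rw [perObj_of_le S hm B le_rfl, Nat.sub_self, perObj_of_lt S hm B hm]

variable [Preadditive C]

def perMap (g : ∀ j, B j ⟶ B (j + 1)) (w : B (m - 1) ⟶ S.obj (B 0)) (j : ℕ) :
    perObj S hm B j ⟶ perObj S hm B (j + 1) :=
  if h : j + 1 < m then
    eqToHom (perObj_of_lt S hm B (by omega)) ≫ g j ≫ eqToHom (perObj_of_lt S hm B h).symm
  else if h' : j + 1 = m then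
    eqToHom ((perObj_of_lt S hm B (by omega)).trans (by rw [show j = m - 1 by omega])) ≫ w ≫
      eqToHom (show S.obj (B 0) = perObj S hm B (j + 1) by rw [h', perObj_last])
  else
    eqToHom (perObj_of_le S hm B (by omega)) ≫ psign m (S.map (perMap g w (j - m))) ≫
      eqToHom ((perObj_of_le S hm B (by omega)).trans
        (by rw [show j + 1 - m = j - m + 1 by omega])).symm
termination_by j
decreasing_by omega

variable (g : ∀ j, B j ⟶ B (j + 1)) (w : B (m - 1) ⟶ S.obj (B 0))

lemma perMap_of_lt {j : ℕ} (h : j + 1 < m) :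
    perMap S hm B g w j =
      eqToHom (perObj_of_lt S hm B (by omega)) ≫ g j ≫
        eqToHom (perObj_of_lt S hm B h).symm := by
  rw [perMap, dif_pos h]

lemma perMap_congr {j j' : ℕ} (h : j = j') :
    perMap S hm B g w j = eqToHom (by rw [h]) ≫ perMap S hm B g w j' ≫ eqToHom (by rw [h]) := by
  subst h; simp

lemma perMap_add (i : ℕ) :
    perMap S hm B g w (m + i) =
      eqToHom (perObj_add S hm B i) ≫ psign m (S.map (perMap S hm B g w i)) ≫
        eqToHom (perObj_add S hm B (i + 1)).symm := by
  rw [perMap, dif_neg (by omega), dif_neg (by omega),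
    perMap_congr S hm B g w (Nat.add_sub_cancel_left ..), Functor.map_comp, Functor.map_comp,
    eqToHom_map, eqToHom_map, comp_psign, psign_comp]
  simp only [Category.assoc, eqToHom_trans, eqToHom_trans_assoc]

lemma perMap_pred_last :
    perMap S hm B g w (m - 1) =
      eqToHom (perObj_of_lt S hm B (by omega)) ≫ w ≫
        eqToHom (show S.obj (B 0) = perObj S hm B (m - 1 + 1) by
          rw [Nat.sub_add_cancel hm, perObj_last]) := by
  rw [perMap, dif_neg (by omega), dif_pos (by omega)]

def ofWindow : PSeq m S where
  X := perObj S hm B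
  f := perMap S hm B g w
  per := perObj_add S hm B
  fper := perMap_add S hm B g w

lemma ofWindow_isWindowOf : IsWindowOf hm (ofWindow S hm B g w) B g w := by
  refine ⟨fun _ _ => perObj_of_lt S hm B (by omega),
    fun _ _ => perMap_of_lt S hm B g w (by omega), ?_⟩
  simp only [PSeq.wmap, ofWindow, perMap_pred_last, Category.assoc]
  -- `erw`: the proof inside `PSeq.wmap` is typed with `(ofWindow …).X`, not `perObj`
  erw [eqToHom_trans, eqToHom_trans, eqToHom_refl, Category.comp_id]

variable (T : PSeq m S) (b : ∀ j, B j ⟶ T.X j)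

def perHom (j : ℕ) : perObj S hm B j ⟶ T.X j :=
  if h : j < m then eqToHom (perObj_of_lt S hm B h) ≫ b j
  else
    eqToHom (perObj_of_le S hm B (by omega)) ≫ S.map (perHom (j - m)) ≫
      eqToHom ((T.per (j - m)).symm.trans (congrArg T.X (by omega)))
termination_by j
decreasing_by omega

lemma perHom_of_lt {j : ℕ} (h : j < m) :
    perHom S hm B T b j = eqToHom (perObj_of_lt S hm B h) ≫ b j := by
  rw [perHom, dif_pos h]

lemma perHom_congr {j j' : ℕ} (h : j = j') :
    perHom S hm B T b j = eqToHom (by rw [h]) ≫ perHom S hm B T b j' ≫ eqToHom (by rw [h]) := by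
  subst h; simp

lemma perHom_add (i : ℕ) :
    perHom S hm B T b (m + i) =
      eqToHom (perObj_add S hm B i) ≫ S.map (perHom S hm B T b i) ≫ eqToHom (T.per i).symm := by
  rw [perHom, dif_neg (by omega), perHom_congr S hm B T b (Nat.add_sub_cancel_left ..)]
  simp only [Functor.map_comp, eqToHom_map, Category.assoc, eqToHom_trans, eqToHom_trans_assoc]

lemma isIso_perHom (hb : ∀ j < m, IsIso (b j)) (j : ℕ) : IsIso (perHom S hm B T b j) := by
  induction j using Nat.strong_induction_on with
  | _ j ih =>
    rw [perHom]
    split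
    · have := hb j ‹_›
      infer_instance
    · have := ih (j - m) (by omega)
      infer_instance

lemma perMap_comp_perHom (hcomm : ∀ j, j + 1 < m → g j ≫ b (j + 1) = b j ≫ T.f j)
    (hlast : w ≫ S.map (b 0) = b (m - 1) ≫ T.wmap hm) (i : ℕ) :
    perMap S hm B g w i ≫ perHom S hm B T b (i + 1) = perHom S hm B T b i ≫ T.f i := by
  induction i using Nat.strong_induction_on with
  | _ i ih =>
    rcases lt_trichotomy (i + 1) m with h | h | h
    · rw [perMap_of_lt S hm B g w h, perHom_of_lt S hm B T b h,
        perHom_of_lt S hm B T b (by omega)]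
      simp [hcomm i h]
    · obtain rfl : i = m - 1 := by omega
      have hf : T.f (m - 1) =
          T.wmap hm ≫ eqToHom (by rw [Nat.sub_add_cancel hm]; exact (T.per 0).symm) := by
        simp [PSeq.wmap]
      rw [perMap_pred_last, perHom_congr S hm B T b (Nat.sub_add_cancel hm),
        show perHom S hm B T b m = _ from perHom_add S hm B T b 0, perHom_of_lt S hm B T b hm,
        perHom_of_lt S hm B T b (by omega), hf]
      simp only [Category.assoc, ← reassoc_of% hlast, Functor.map_comp, eqToHom_map,
        eqToHom_trans, eqToHom_trans_assoc]
      erw [eqToHom_refl, Category.id_comp]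
    · obtain ⟨i, rfl⟩ : ∃ i', i = m + i' := ⟨i - m, by omega⟩
      rw [perMap_add, T.fper, show perHom S hm B T b (m + i + 1) = _ from
        perHom_add S hm B T b (i + 1), perHom_add]
      simp only [Category.assoc, eqToHom_trans_assoc, eqToHom_refl, Category.id_comp]
      rw [← Category.assoc (psign m _), ← psign_comp, ← Functor.map_comp, ih i (by omega),
        Functor.map_comp, comp_psign, Category.assoc]

theorem seqIsoP_ofWindow (hb : ∀ j < m, IsIso (b j))
    (hcomm : ∀ j, j + 1 < m → g j ≫ b (j + 1) = b j ≫ T.f j)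
    (hlast : w ≫ S.map (b 0) = b (m - 1) ≫ T.wmap hm) :
    SeqIsoP (ofWindow S hm B g w) T :=
  ⟨⟨perHom S hm B T b, perMap_comp_perHom S hm B g w T b hcomm hlast, perHom_add S hm B T b⟩,
    isIso_perHom S hm B T b hb⟩

def lowHom (b₀ : B 0 ⟶ T.X 0) (b₁ : B 1 ⟶ T.X 1) : ∀ j, B j ⟶ T.X j
  | 0 => b₀
  | 1 => b₁
  | _ + 2 => 0

theorem seqIsoP_ofWindow_of_isZero (hm₃ : 3 ≤ m) (hB : ∀ j, 2 ≤ j → IsZero (B j))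
    (hT : ∀ j, 2 ≤ j → j ≤ m - 1 → IsZero (T.X j)) (b₀ : B 0 ≅ T.X 0)
    (b₁ : B 1 ≅ T.X 1) (h : g 0 ≫ b₁.hom = b₀.hom ≫ T.f 0) :
    SeqIsoP (ofWindow S hm B g w) T := by
  refine seqIsoP_ofWindow S hm B g w T (lowHom S B T b₀.hom b₁.hom) ?_ ?_ ?_
  · rintro (_ | _ | j) hj
    exacts [inferInstanceAs (IsIso b₀.hom), inferInstanceAs (IsIso b₁.hom),
      (hB _ (by omega)).isIso (hT _ (by omega) (by omega)) _]
  · rintro (_ | _ | j) hj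
    exacts [h, (hT 2 le_rfl (by omega)).eq_of_tgt _ _, (hB _ (by omega)).eq_of_src _ _]
  · exact (hB _ (by omega)).eq_of_src _ _

end PSeq

section Thm34
variable [Preadditive C] [HasZeroObject C] [HasFiniteBiproducts C] [HasBinaryBiproducts C]

/-- A standard right `(n+2)`-angle in `C/X` (see Theorem 3.4). -/
def IsStdAngle (P : C → Prop) (n : ℕ)
    (XX : C → ℕ → C) (dd : ∀ A i, XX A i ⟶ XX A (i + 1)) (eX : ∀ A : C, XX A 0 = A)
    (S : QObj P ⥤ QObj P)
    (hobj : ∀ A : C, S.obj (qObj P A) = qObj P (XX A (n + 1)))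
    (U : PSeq (C := QObj P) (n + 2) S) : Prop :=
  ∃ (A : ℕ → C) (f : ∀ i, A i ⟶ A (i + 1)) (a : ∀ i, A i ⟶ XX (A 0) i),
    IsRightNExactSeq n A f ∧ XMonic P (f 0) ∧
    a 0 = eqToHom (eX (A 0)).symm ∧ (∀ i, f i ≫ a (i + 1) = a i ≫ dd (A 0) i) ∧
    IsWindowOf (by omega) U (fun j => qObj P (A j)) (fun j => qMap P (f j))
      (psign n (qMap P (a (n + 1))) ≫ eqToHom (hobj (A 0)).symm)

theorem trivial_sequence_is_right_angle_general
    (P : C → Prop) (n : ℕ) (hn : 1 ≤ n)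
    (XX : C → ℕ → C) (dd : ∀ A i, XX A i ⟶ XX A (i + 1)) (eX : ∀ A : C, XX A 0 = A)
    (hXexact : ∀ A, IsRightNExactSeq n (XX A) (dd A))
    -- the endofunctor `Σ` of Proposition 3.1
    (S : QObj P ⥤ QObj P) (hobj : ∀ A : C, S.obj (qObj P A) = qObj P (XX A (n + 1)))
    (A : C) (T : PSeq (C := QObj P) (n + 2) S)
    (e0 : T.X 0 = qObj P A) (e1 : T.X 1 = qObj P A)
    (hT0 : T.f 0 = eqToHom (e0.trans e1.symm))
    (hTz : ∀ i, 2 ≤ i → i ≤ n + 1 → IsZero (T.X i)) :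
    ∃ U, IsStdAngle P n XX dd eX S hobj U ∧ SeqIsoP U T := by
  refine ⟨PSeq.ofWindow S (by omega) (fun j => qObj P (trivSeqObj A j))
      (fun j => qMap P (trivSeqMap A j))
      (psign n (qMap P (trivSeqHom (dd A) (eX A) (n + 1))) ≫ eqToHom (hobj A).symm),
    ⟨trivSeqObj A, trivSeqMap A, trivSeqHom (dd A) (eX A), isRightNExactSeq_trivSeq A n,
      xMonic_id P A, rfl, trivSeqMap_comp_trivSeqHom (eX A) (hXexact A).comp_eq_zero_s10,
      PSeq.ofWindow_isWindowOf ..⟩,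
    PSeq.seqIsoP_ofWindow_of_isZero S _ _ _ _ T (by omega)
      (fun _ hj => isZero_qObj P (isZero_trivSeqObj A hj)) hTz (eqToIso e0.symm)
      (eqToIso e1.symm) ?_⟩
  rw [hT0]
  exact (Category.id_comp _).trans (eqToHom_trans e0.symm _).symm

/-- RN1(b) in Theorem 3.4. For each object `A` of `C`, the trivial
sequence `A → A → 0 → ⋯ → 0 → Σ A` is a right `(n+2)`-angle in `C/X`, i.e. it is
isomorphic to a standard right `(n+2)`-angle. -/
theorem trivial_sequence_is_right_angle
    (P : C → Prop) (n : ℕ) (hn : 1 ≤ n)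
    (hPiso : ∀ {A B : C}, P A → (A ≅ B) → P B)
    (hPsum : ∀ {A B : C}, P A → P B → P (A ⊞ B))
    (hPsummand : ∀ {A M : C}, P M → ∀ (i : A ⟶ M) (p : M ⟶ A), i ≫ p = 𝟙 A → P A)
    (hCov : ∀ A : C, ∃ (M : C) (f : A ⟶ M), P M ∧ XMonic P f)
    (hNCok : ∀ {A B : C} (f : A ⟶ B), XMonic P f → HasNCokernel n f)
    (hSpecial : ∀ {A M : C} (f : A ⟶ M), P M → XMonic P f → HasSpecialNCokernel P n f)
    (XX : C → ℕ → C) (dd : ∀ A i, XX A i ⟶ XX A (i + 1)) (eX : ∀ A : C, XX A 0 = A)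
    (hXexact : ∀ A, IsRightNExactSeq n (XX A) (dd A))
    (hXP : ∀ A i, 1 ≤ i → i ≤ n → P (XX A i))
    (hXmono : ∀ A, XMonic P (dd A 0))
    -- the endofunctor `Σ` of Proposition 3.1
    (S : QObj P ⥤ QObj P) (hobj : ∀ A : C, S.obj (qObj P A) = qObj P (XX A (n + 1)))
    (hSadd : S.Additive)
    (hSmap : ∀ (A A' : C) (φ : A ⟶ A') (x : ∀ i, XX A i ⟶ XX A' i),
      x 0 = eqToHom (eX A) ≫ φ ≫ eqToHom (eX A').symm →
      (∀ i, dd A i ≫ x (i + 1) = x i ≫ dd A' i) →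
      S.map (qMap P φ) = eqToHom (hobj A) ≫ qMap P (x (n + 1)) ≫ eqToHom (hobj A').symm)
    (A : C) (T : PSeq (C := QObj P) (n + 2) S)
    (e0 : T.X 0 = qObj P A) (e1 : T.X 1 = qObj P A)
    (hT0 : T.f 0 = eqToHom (e0.trans e1.symm))
    (hTz : ∀ i, 2 ≤ i → i ≤ n + 1 → IsZero (T.X i)) :
    ∃ U, IsStdAngle P n XX dd eX S hobj U ∧ SeqIsoP U T :=
  trivial_sequence_is_right_angle_general P n hn XX dd eX hXexact S hobj A T e0 e1 hT0 hTz

end Thm34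
end
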